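/- arXiv:1509.02897 — 2 statements merged into one kernel-verified Lean document; each statement's English description precedes it below -/
import Mathlib

section
/- For every angle 0 < α < π there is a constant c_α > 0 with the following property. Let K ⊆ ℝ² be an intersection of two closed half-planes such that K does not contain a line, the corner point of K (the intersection of the two boundary lines) is the closest point of K to the origin, and the interior angle of K at the corner equals α. Let Δ_K be the distance from the origin to K. Then for every 0 < ε < 1/2: c_α · ε · e^{−(1+ε)·Δ_K²} ≤ 𝒢(K) ≤ e^{−Δ_K²/2}, where 𝒢 is the standard Gaussian measure on ℝ². -/
/-!
The upper bound holds for every set: `K` misses the open disc of radius `Δ_K`, and in polar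
coordinates `𝒢 {x | r ≤ ‖x‖} = ∫_r^∞ t e^{-t²/2} dt = e^{-r²/2}`.

For the lower bound let `u₁, u₂` be the unit outer normals, so `⟪u₁, u₂⟫ = cos (π - α)`.
Moving from the corner `z` to `w = z - (u₁ + u₂)/2` takes us a distance `ρ = (1 - cos α)/2`
inside each half-plane, so `K` contains the disc of radius `ρ` about `w`, all of whose points
have norm at most `Δ_K + 2`. The Gaussian density is at least `e^{-(Δ_K+2)²/2}/(2π)` there, so
`𝒢(K) ≥ ρ² e^{-(Δ_K+2)²/2}/2`, and `(Δ+2)²/2 ≤ Δ² + 4` turns this into the stated bound with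
`c_α = ρ² e^{-4}`.
-/

open MeasureTheory ProbabilityTheory Real
open scoped RealInnerProductSpace

noncomputable section

/-- The standard Gaussian measure `𝒢` on the Euclidean plane. -/
def gaussPlane : Measure (EuclideanSpace ℝ (Fin 2)) :=
  (Measure.pi fun _ => gaussianReal 0 1).map (WithLp.toLp 2)

open Set Metric InnerProductGeometry
open scoped ENNReal

theorem MeasureTheory.MeasurePreserving.map_withDensity {α β : Type*} [MeasurableSpace α]
    [MeasurableSpace β] {μ : Measure α} {ν : Measure β} {e : α ≃ᵐ β}
    (he : MeasurePreserving e μ ν) (f : α → ℝ≥0∞) :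
    (μ.withDensity f).map e = ν.withDensity (f ∘ e.symm) := by
  ext s hs
  rw [Measure.map_apply e.measurable hs, withDensity_apply _ (e.measurable hs),
    withDensity_apply _ hs, ← he.setLIntegral_comp_preimage_emb e.measurableEmbedding]
  simp

def gaussPlanePDF (x : EuclideanSpace ℝ (Fin 2)) : ℝ := (2 * π)⁻¹ * exp (-‖x‖ ^ 2 / 2)

theorem gaussianPDF_mul_gaussianPDF (x y : ℝ) :
    gaussianPDF 0 1 x * gaussianPDF 0 1 y =
      ENNReal.ofReal ((2 * π)⁻¹ * exp (-(x ^ 2 + y ^ 2) / 2)) := by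
  rw [gaussianPDF, gaussianPDF, ← ENNReal.ofReal_mul (gaussianPDFReal_nonneg _ _ _)]
  congr 1
  simp only [gaussianPDFReal, NNReal.coe_one, mul_one, sub_zero]
  have h2π : √(2 * π) * √(2 * π) = 2 * π := Real.mul_self_sqrt (by positivity)
  rw [show -(x ^ 2 + y ^ 2) / 2 = -x ^ 2 / 2 + -y ^ 2 / 2 by ring, exp_add]
  conv_rhs => rw [← h2π, mul_inv]
  ring

theorem gaussPlane_eq_withDensity :
    gaussPlane = volume.withDensity fun x => ENNReal.ofReal (gaussPlanePDF x) := by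
  let e : ℝ × ℝ ≃ᵐ EuclideanSpace ℝ (Fin 2) :=
    MeasurableEquiv.finTwoArrow.symm.trans (MeasurableEquiv.toLp 2 (Fin 2 → ℝ))
  have he : MeasurePreserving e :=
    (volume_preserving_finTwoArrow ℝ).symm.trans (PiLp.volume_preserving_toLp (Fin 2))
  have hG : gaussPlane = ((gaussianReal 0 1).prod (gaussianReal 0 1)).map e := by
    rw [gaussPlane, ← (measurePreserving_finTwoArrow (gaussianReal 0 1)).symm.map_eq,
      Measure.map_map (WithLp.measurable_toLp 2 _) (MeasurableEquiv.measurable _)]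
    rfl
  rw [hG, gaussianReal_of_var_ne_zero 0 one_ne_zero,
    prod_withDensity (measurable_gaussianPDF 0 1) (measurable_gaussianPDF 0 1),
    ← Measure.volume_eq_prod, he.map_withDensity]
  congr 1
  funext x
  simp [e, gaussPlanePDF, gaussianPDF_mul_gaussianPDF, EuclideanSpace.real_norm_sq_eq]

theorem integral_Ioi_mul_exp_neg_sq_div_two (r : ℝ) :
    ∫ t in Ioi r, t * exp (-t ^ 2 / 2) = exp (-r ^ 2 / 2) := by
  have hderiv (t : ℝ) : HasDerivAt (fun t => -exp (-t ^ 2 / 2)) (t * exp (-t ^ 2 / 2)) t := by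
    refine ((hasDerivAt_pow 2 t).fun_neg.div_const 2).exp.fun_neg.congr_deriv ?_
    push_cast
    ring
  have hint : IntegrableOn (fun t => t * exp (-t ^ 2 / 2)) (Ioi r) := by
    convert (integrable_mul_exp_neg_mul_sq (b := 1 / 2) (by norm_num)).integrableOn using 4
    ring
  have hlim : Filter.Tendsto (fun t => -exp (-t ^ 2 / 2)) Filter.atTop (nhds 0) := by
    have := (tendsto_exp_neg_atTop_nhds_zero.comp
      ((Filter.tendsto_pow_atTop two_ne_zero).atTop_div_const two_pos)).neg
    simpa [Function.comp_def, neg_div] using this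
  rw [integral_Ioi_of_hasDerivAt_of_tendsto (hderiv r).continuousAt.continuousWithinAt
    (fun t _ => hderiv t) hint hlim]
  ring

theorem EuclideanSpace.integral_fun_norm_fin_two (f : ℝ → ℝ) :
    ∫ x : EuclideanSpace ℝ (Fin 2), f ‖x‖ = 2 * π * ∫ t in Ioi 0, t * f t := by
  rw [integral_fun_norm_addHaar volume f]
  simp [Measure.real, ENNReal.toReal_ofReal pi_pos.le, mul_assoc]

theorem integrable_gaussPlanePDF : Integrable gaussPlanePDF := by
  refine (integrable_fun_norm_addHaar volume
    (f := fun t => (2 * π)⁻¹ * exp (-t ^ 2 / 2))).2 ?_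
  simp only [finrank_euclideanSpace_fin, smul_eq_mul]
  convert ((integrable_mul_exp_neg_mul_sq (b := 1 / 2) (by norm_num)).const_mul
    (2 * π)⁻¹).integrableOn using 2 with t
  ring_nf

theorem gaussPlane_apply (s : Set (EuclideanSpace ℝ (Fin 2))) :
    gaussPlane s = ENNReal.ofReal (∫ x in s, gaussPlanePDF x) := by
  rw [gaussPlane_eq_withDensity, withDensity_apply', ofReal_integral_eq_lintegral_ofReal
    integrable_gaussPlanePDF.integrableOn (.of_forall fun x => by unfold gaussPlanePDF; positivity)]

theorem gaussPlane_setOf_le_norm (r : ℝ) (hr : 0 ≤ r) :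
    gaussPlane {x | r ≤ ‖x‖} = ENNReal.ofReal (exp (-r ^ 2 / 2)) := by
  have hS : MeasurableSet {x : EuclideanSpace ℝ (Fin 2) | r ≤ ‖x‖} :=
    measurableSet_le measurable_const measurable_norm
  have hindicator : {x : EuclideanSpace ℝ (Fin 2) | r ≤ ‖x‖}.indicator gaussPlanePDF =
      fun x => (2 * π)⁻¹ * (Ici r).indicator (fun t => exp (-t ^ 2 / 2)) ‖x‖ := by
    ext x
    simp [indicator_apply, gaussPlanePDF]
  rw [gaussPlane_apply, ← integral_indicator hS, hindicator, integral_const_mul,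
    EuclideanSpace.integral_fun_norm_fin_two, ← integral_Ici_eq_integral_Ioi]
  simp_rw [← indicator_mul_right (Ici r) (fun t : ℝ => t)]
  rw [setIntegral_indicator measurableSet_Ici, Ici_inter_Ici, sup_of_le_right hr,
    integral_Ici_eq_integral_Ioi, integral_Ioi_mul_exp_neg_sq_div_two]
  field_simp

theorem gaussPlane_le_exp_neg_infDist_sq (K : Set (EuclideanSpace ℝ (Fin 2))) :
    gaussPlane K ≤ ENNReal.ofReal (exp (-infDist 0 K ^ 2 / 2)) := by
  rw [← gaussPlane_setOf_le_norm _ infDist_nonneg]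
  exact measure_mono fun x hx => by simpa using infDist_le_dist_of_mem (x := 0) hx

section Wedge

variable {E : Type*} [NormedAddCommGroup E] [InnerProductSpace ℝ E]

theorem closedBall_subset_setOf_inner_le {a w : E} {ρ b : ℝ} (h : ⟪a, w⟫ + ‖a‖ * ρ ≤ b) :
    closedBall w ρ ⊆ {x | ⟪a, x⟫ ≤ b} := by
  intro x hx
  have hdist : ‖x - w‖ ≤ ρ := by rwa [mem_closedBall, dist_eq_norm] at hx
  calc ⟪a, x⟫ = ⟪a, w⟫ + ⟪a, x - w⟫ := by rw [← inner_add_right, add_sub_cancel]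
    _ ≤ ⟪a, w⟫ + ‖a‖ * ρ := by
      gcongr
      exact (real_inner_le_norm a _).trans (mul_le_mul_of_nonneg_left hdist (norm_nonneg a))
    _ ≤ b := h

theorem inner_inv_norm_smul_add_inv_norm_smul (a₁ a₂ : E) :
    ⟪a₁, ‖a₁‖⁻¹ • a₁ + ‖a₂‖⁻¹ • a₂⟫ = ‖a₁‖ * (1 + cos (angle a₁ a₂)) := by
  rcases eq_or_ne a₁ 0 with rfl | ha₁
  · simp
  have : ‖a₁‖ ≠ 0 := norm_ne_zero_iff.2 ha₁
  rw [inner_add_right, real_inner_smul_right, real_inner_smul_right, real_inner_self_eq_norm_sq,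
    cos_angle]
  field_simp

theorem exists_closedBall_subset_wedge (a₁ a₂ z : E) :
    ∃ w, ‖w - z‖ ≤ 1 ∧ closedBall w ((1 + cos (angle a₁ a₂)) / 2) ⊆
      {x | ⟪a₁, x⟫ ≤ ⟪a₁, z⟫} ∩ {x | ⟪a₂, x⟫ ≤ ⟪a₂, z⟫} := by
  set u := ‖a₁‖⁻¹ • a₁ + ‖a₂‖⁻¹ • a₂
  have hu₁ : ⟪a₁, u⟫ = ‖a₁‖ * (1 + cos (angle a₁ a₂)) :=
    inner_inv_norm_smul_add_inv_norm_smul a₁ a₂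
  have hu₂ : ⟪a₂, u⟫ = ‖a₂‖ * (1 + cos (angle a₁ a₂)) := by
    rw [angle_comm, ← inner_inv_norm_smul_add_inv_norm_smul, add_comm]
  have hu : ‖u‖ ≤ 2 := by
    refine (norm_add_le _ _).trans ?_
    simp only [norm_smul, norm_inv, norm_norm]
    linarith [inv_mul_le_one (a := ‖a₁‖), inv_mul_le_one (a := ‖a₂‖)]
  refine ⟨z - (2 : ℝ)⁻¹ • u, ?_, subset_inter ?_ ?_⟩
  · rw [sub_sub_cancel_left, norm_neg, norm_smul]
    norm_num
    linarith
  · apply closedBall_subset_setOf_inner_le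
    rw [inner_sub_right, real_inner_smul_right, hu₁]
    linarith
  · apply closedBall_subset_setOf_inner_le
    rw [inner_sub_right, real_inner_smul_right, hu₂]
    linarith

end Wedge

theorem ofReal_mul_volume_le_gaussPlane {s : Set (EuclideanSpace ℝ (Fin 2))} {R : ℝ}
    (hs : MeasurableSet s) (hsR : s ⊆ closedBall 0 R) :
    ENNReal.ofReal ((2 * π)⁻¹ * exp (-R ^ 2 / 2)) * volume s ≤ gaussPlane s := by
  rw [gaussPlane_eq_withDensity, withDensity_apply _ hs, ← setLIntegral_const]
  refine setLIntegral_mono' hs fun x hx => ENNReal.ofReal_le_ofReal ?_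
  have hxR : ‖x‖ ≤ R := by simpa using hsR hx
  unfold gaussPlanePDF
  gcongr

theorem ofReal_le_gaussPlane_closedBall (w : EuclideanSpace ℝ (Fin 2)) {ρ : ℝ} (hρ : 0 ≤ ρ) :
    ENNReal.ofReal (ρ ^ 2 / 2 * exp (-(‖w‖ + ρ) ^ 2 / 2)) ≤ gaussPlane (closedBall w ρ) := by
  refine le_trans (le_of_eq ?_) (ofReal_mul_volume_le_gaussPlane (R := ‖w‖ + ρ)
    measurableSet_closedBall (closedBall_subset_closedBall' (by simp [add_comm])))
  rw [EuclideanSpace.volume_closedBall_fin_two, ← ENNReal.ofReal_pow hρ,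
    ← ENNReal.ofReal_mul (by positivity), ← ENNReal.ofReal_mul (by positivity)]
  congr 1
  field_simp

theorem ofReal_le_gaussPlane_wedge (a₁ a₂ z : EuclideanSpace ℝ (Fin 2)) :
    ENNReal.ofReal (((1 + cos (angle a₁ a₂)) / 2) ^ 2 / 2 * exp (-(‖z‖ + 2) ^ 2 / 2)) ≤
      gaussPlane ({x | ⟪a₁, x⟫ ≤ ⟪a₁, z⟫} ∩ {x | ⟪a₂, x⟫ ≤ ⟪a₂, z⟫}) := by
  obtain ⟨w, hwz, hball⟩ := exists_closedBall_subset_wedge a₁ a₂ z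
  have hρ0 : 0 ≤ (1 + cos (angle a₁ a₂)) / 2 := by linarith [neg_one_le_cos (angle a₁ a₂)]
  have hρ1 : (1 + cos (angle a₁ a₂)) / 2 ≤ 1 := by linarith [cos_le_one (angle a₁ a₂)]
  set ρ := (1 + cos (angle a₁ a₂)) / 2
  have hw : ‖w‖ + ρ ≤ ‖z‖ + 2 := by linarith [norm_le_norm_add_norm_sub' w z]
  calc ENNReal.ofReal (ρ ^ 2 / 2 * exp (-(‖z‖ + 2) ^ 2 / 2))
      ≤ ENNReal.ofReal (ρ ^ 2 / 2 * exp (-(‖w‖ + ρ) ^ 2 / 2)) := by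
        gcongr
    _ ≤ gaussPlane (closedBall w ρ) := ofReal_le_gaussPlane_closedBall w hρ0
    _ ≤ _ := measure_mono hball

theorem mul_exp_neg_le_exp_neg_add_two_sq {ε : ℝ} (hε0 : 0 ≤ ε) (hε : ε ≤ 1 / 2) (Δ : ℝ) :
    exp (-4) * ε * exp (-((1 + ε) * Δ ^ 2)) ≤ exp (-(Δ + 2) ^ 2 / 2) / 2 := by
  have hexp : -4 + -((1 + ε) * Δ ^ 2) ≤ -(Δ + 2) ^ 2 / 2 := by
    nlinarith [sq_nonneg (Δ - 2), mul_nonneg hε0 (sq_nonneg Δ)]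
  calc exp (-4) * ε * exp (-((1 + ε) * Δ ^ 2)) = ε * exp (-4 + -((1 + ε) * Δ ^ 2)) := by
        rw [exp_add]; ring
    _ ≤ 1 / 2 * exp (-(Δ + 2) ^ 2 / 2) := by gcongr
    _ = exp (-(Δ + 2) ^ 2 / 2) / 2 := by ring

/-- Let `K` be an intersection of two closed half-planes such that `K` contains no line, the
corner (intersection of the two boundary lines) is the closest point of `K` to the origin, and
the interior angle of `K` at the corner is `α ∈ (0, π)` (equivalently, the angle between the
outward normals is `π - α`). Then for every `0 < ε < 1/2`,
`c_α · ε · e^{-(1+ε)Δ_K²} ≤ 𝒢(K) ≤ e^{-Δ_K²/2}`, where `Δ_K` is the distance from the origin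
to `K`. -/
theorem gaussian_measure_wedge (α : ℝ) (hα0 : 0 < α) (hαπ : α < π) :
    ∃ c : ℝ, 0 < c ∧
      ∀ (a₁ a₂ : EuclideanSpace ℝ (Fin 2)) (b₁ b₂ : ℝ) (K : Set (EuclideanSpace ℝ (Fin 2))),
        a₁ ≠ 0 → a₂ ≠ 0 →
        K = {x | ⟪a₁, x⟫ ≤ b₁} ∩ {x | ⟪a₂, x⟫ ≤ b₂} →
        (¬ ∃ p v : EuclideanSpace ℝ (Fin 2), v ≠ 0 ∧ ∀ t : ℝ, p + t • v ∈ K) →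
        (∃ z : EuclideanSpace ℝ (Fin 2),
          ⟪a₁, z⟫ = b₁ ∧ ⟪a₂, z⟫ = b₂ ∧ ∀ x ∈ K, ‖z‖ ≤ ‖x‖) →
        InnerProductGeometry.angle a₁ a₂ = π - α →
        ∀ ε : ℝ, 0 < ε → ε < 1 / 2 →
          c * ε * Real.exp (-((1 + ε) * (Metric.infDist 0 K) ^ 2)) ≤ (gaussPlane K).toReal ∧
            (gaussPlane K).toReal ≤ Real.exp (-(Metric.infDist 0 K) ^ 2 / 2) := by
  have hcos : cos α < 1 := by simpa using cos_lt_cos_of_nonneg_of_le_pi le_rfl hαπ.le hα0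
  have hρ : 0 < (1 - cos α) / 2 := by linarith
  refine ⟨((1 - cos α) / 2) ^ 2 * exp (-4), by positivity, ?_⟩
  rintro a₁ a₂ - - K - - rfl - ⟨z, rfl, rfl, hz⟩ hangle ε hε0 hε
  set K := {x | ⟪a₁, x⟫ ≤ ⟪a₁, z⟫} ∩ {x | ⟪a₂, x⟫ ≤ ⟪a₂, z⟫}
  have hzK : z ∈ K := ⟨le_refl ⟪a₁, z⟫, le_refl ⟪a₂, z⟫⟩
  have hΔ : infDist 0 K = ‖z‖ := le_antisymm (by simpa using infDist_le_dist_of_mem (x := 0) hzK)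
    ((le_infDist ⟨z, hzK⟩).2 fun y hy => by simpa using hz y hy)
  have hupper := gaussPlane_le_exp_neg_infDist_sq K
  refine ⟨?_, ENNReal.toReal_le_of_le_ofReal (exp_nonneg _) hupper⟩
  rw [← ENNReal.ofReal_le_iff_le_toReal (ne_top_of_le_ne_top ENNReal.ofReal_ne_top hupper)]
  refine le_trans (ENNReal.ofReal_le_ofReal ?_) (ofReal_le_gaussPlane_wedge a₁ a₂ z)
  rw [hangle, cos_pi_sub, ← sub_eq_add_neg, hΔ]
  have := mul_le_mul_of_nonneg_left (mul_exp_neg_le_exp_neg_add_two_sq hε0.le hε.le ‖z‖)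
    (sq_nonneg ((1 - cos α) / 2))
  linarith
end
end

section
/- Let 0 < τ < 2, α = 1 − τ²/2, β = √(τ² − τ⁴/4), and Δ(u,v) = min{u, αu + βv}. There is a constant c_τ > 0 (depending only on τ) such that for every t ≥ 0, every 0 < ε < 1/3, and X₁, Y₁ independent standard Gaussians: c_τ · ε · e^{−(1+ε)·(4/(4−τ²))·t²} ≤ Pr[Δ(X₁, Y₁) ≥ t] ≤ e^{−(4/(4−τ²))·t²/2}. -/
/-!
On `{Δ ≥ t}` both `X` and `αX + βY` are at least `t`, so `(1 + α)X + βY` is at least `2t`. This is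
a centred Gaussian of variance `(1 + α)² + β² = 4 - τ²`, and the sub-Gaussian Chernoff bound gives
the upper estimate.

For the lower estimate, `{Δ ≥ t}` contains the box `[t, t + 1] × [Mt + C, Mt + C + 1]` with
`M = (1 - α)/β` and `C = |α|/β`. Its Gaussian mass is at least a constant times
`exp (-(1 + M²) t²)`, and `1 + M² = 4/(4 - τ²)`. The factor `ε e^{-ε…} ≤ 1` in the claimed bound
is pure slack.
-/

open MeasureTheory ProbabilityTheory Real

noncomputable section

/-- The distribution of a pair of independent standard Gaussians. -/
def gauss2 : Measure (ℝ × ℝ) := (gaussianReal 0 1).prod (gaussianReal 0 1)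

open scoped NNReal

instance : IsProbabilityMeasure gauss2 := by
  unfold gauss2; infer_instance

lemma hasSubgaussianMGF_id_gaussianReal (v : ℝ≥0) :
    HasSubgaussianMGF id v (gaussianReal 0 v) where
  integrable_exp_mul t := integrable_exp_mul_gaussianReal t
  mgf_le t := by simp [mgf_id_gaussianReal]

lemma ProbabilityTheory.HasSubgaussianMGF.add_prod {Ω Ω' : Type*} {mΩ : MeasurableSpace Ω}
    {mΩ' : MeasurableSpace Ω'} {μ : Measure Ω} {ν : Measure Ω'} [IsProbabilityMeasure μ]
    [IsProbabilityMeasure ν] {X : Ω → ℝ} {Y : Ω' → ℝ} {cX cY : ℝ≥0}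
    (hX : HasSubgaussianMGF X cX μ) (hY : HasSubgaussianMGF Y cY ν) :
    HasSubgaussianMGF (fun ω ↦ X ω.1 + Y ω.2) (cX + cY) (μ.prod ν) := by
  have hX' : HasSubgaussianMGF (X ∘ Prod.fst) cX (μ.prod ν) :=
    .of_map measurable_fst.aemeasurable (by rwa [measurePreserving_fst.map_eq])
  have hY' : HasSubgaussianMGF (Y ∘ Prod.snd) cY (μ.prod ν) :=
    .of_map measurable_snd.aemeasurable (by rwa [measurePreserving_snd.map_eq])
  exact hX'.add_of_indepFun hY' (indepFun_prod₀ hX.aemeasurable hY.aemeasurable)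

lemma hasSubgaussianMGF_linear_gauss2 (a b : ℝ) :
    HasSubgaussianMGF (fun z : ℝ × ℝ ↦ a * z.1 + b * z.2) ⟨a ^ 2 + b ^ 2, by positivity⟩
      gauss2 := by
  have h := ((hasSubgaussianMGF_id_gaussianReal 1).const_mul a).add_prod
    ((hasSubgaussianMGF_id_gaussianReal 1).const_mul b)
  -- `const_mul` writes its constant as a bare subtype element, out of reach of `NNReal` simp lemmas
  have hc : (⟨a ^ 2, sq_nonneg a⟩ * 1 + ⟨b ^ 2, sq_nonneg b⟩ * 1 : ℝ≥0)
      = ⟨a ^ 2 + b ^ 2, by positivity⟩ := by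
    apply NNReal.eq
    show a ^ 2 * 1 + b ^ 2 * 1 = a ^ 2 + b ^ 2
    ring
  rwa [hc] at h

lemma gauss2_real_min_ge_le_exp (α β : ℝ) {t : ℝ} (ht : 0 ≤ t) :
    gauss2.real {z | t ≤ min z.1 (α * z.1 + β * z.2)}
      ≤ exp (-(2 * t) ^ 2 / (2 * ((1 + α) ^ 2 + β ^ 2))) := by
  calc gauss2.real {z | t ≤ min z.1 (α * z.1 + β * z.2)}
      ≤ gauss2.real {z | 2 * t ≤ (1 + α) * z.1 + β * z.2} := by
        refine measureReal_mono (Set.ofPred_subset_ofPred.2 fun z hz ↦ ?_)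
        linarith [min_le_left z.1 (α * z.1 + β * z.2), min_le_right z.1 (α * z.1 + β * z.2)]
    _ ≤ _ := (hasSubgaussianMGF_linear_gauss2 (1 + α) β).measure_ge_le (by positivity)

lemma gaussianPDFReal_antitoneOn (μ : ℝ) (v : ℝ≥0) :
    AntitoneOn (gaussianPDFReal μ v) (Set.Ici μ) := fun x hx y _ hxy ↦ by
  simp only [gaussianPDFReal_def]
  gcongr
  exact sub_nonneg.2 hx

lemma mul_gaussianPDFReal_le_gaussianReal_Icc {μ a ℓ : ℝ} {v : ℝ≥0} (hv : v ≠ 0) (ha : μ ≤ a)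
    (hℓ : 0 ≤ ℓ) :
    ℓ * gaussianPDFReal μ v (a + ℓ) ≤ (gaussianReal μ v).real (Set.Icc a (a + ℓ)) := by
  rw [measureReal_def, gaussianReal_apply_eq_integral μ hv,
    ENNReal.toReal_ofReal
      (setIntegral_nonneg measurableSet_Icc fun x _ ↦ gaussianPDFReal_nonneg μ v x)]
  have := setIntegral_ge_of_const_le_real (μ := volume) (measurableSet_Icc (a := a) (b := a + ℓ))
    (by simp)
    (fun x hx ↦ gaussianPDFReal_antitoneOn μ v (ha.trans hx.1) (ha.trans (by linarith)) hx.2)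
    (integrable_gaussianPDFReal μ v).integrableOn
  rwa [volume_real_Icc_of_le (by linarith), add_sub_cancel_left, mul_comm] at this

lemma inv_sqrt_mul_exp_le_gaussianPDFReal (x y : ℝ) :
    (√(2 * π))⁻¹ * exp (-(x ^ 2 + y ^ 2)) ≤ gaussianPDFReal 0 1 (x + y) := by
  simp only [gaussianPDFReal_def, NNReal.coe_one, mul_one, sub_zero]
  gcongr
  nlinarith [sq_nonneg (x - y)]

lemma inv_sqrt_mul_exp_le_gaussianReal_Icc {x y : ℝ} (h : 0 ≤ x + y) :
    (√(2 * π))⁻¹ * exp (-(x ^ 2 + (y + 1) ^ 2))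
      ≤ (gaussianReal 0 1).real (Set.Icc (x + y) (x + y + 1)) := by
  calc _ ≤ gaussianPDFReal 0 1 (x + (y + 1)) := inv_sqrt_mul_exp_le_gaussianPDFReal x (y + 1)
    _ = 1 * gaussianPDFReal 0 1 (x + y + 1) := by rw [one_mul, add_assoc]
    _ ≤ _ := mul_gaussianPDFReal_le_gaussianReal_Icc one_ne_zero h zero_le_one

lemma Icc_prod_Icc_subset_min_ge {α β t x : ℝ} (hβ : 0 ≤ β) (hx : (1 - α) * t + |α| ≤ β * x) :
    Set.Icc t (t + 1) ×ˢ Set.Icc x (x + 1) ⊆ {z | t ≤ min z.1 (α * z.1 + β * z.2)} := by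
  rintro ⟨u, v⟩ ⟨⟨htu, hut⟩, hxv, -⟩
  have hα : -|α| ≤ α * (u - t) := by
    calc -|α| ≤ -(|α| * |u - t|) := by
          gcongr
          exact mul_le_of_le_one_right (abs_nonneg α) (abs_le.2 ⟨by linarith, by linarith⟩)
      _ ≤ α * (u - t) := by rw [← abs_mul]; exact neg_abs_le _
  have hβ : β * x ≤ β * v := by gcongr
  exact le_min htu (by linarith)

lemma exists_pos_mul_exp_le_gauss2_min_ge {α β : ℝ} (hα : α ≤ 1) (hβ : 0 < β) :
    ∃ c > 0, ∀ t, 0 ≤ t → c * exp (-((1 + ((1 - α) / β) ^ 2) * t ^ 2))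
      ≤ gauss2.real {z | t ≤ min z.1 (α * z.1 + β * z.2)} := by
  set M := (1 - α) / β with hM
  set C := |α| / β with hC
  refine ⟨(√(2 * π))⁻¹ * exp (-1) * ((√(2 * π))⁻¹ * exp (-(C + 1) ^ 2)), by positivity,
    fun t ht ↦ ?_⟩
  have hx : 0 ≤ M * t + C :=
    add_nonneg (mul_nonneg (div_nonneg (by linarith) hβ.le) ht) (div_nonneg (abs_nonneg α) hβ.le)
  have hbox : Set.Icc t (t + 1) ×ˢ Set.Icc (M * t + C) (M * t + C + 1)
      ⊆ {z | t ≤ min z.1 (α * z.1 + β * z.2)} :=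
    Icc_prod_Icc_subset_min_ge hβ.le (le_of_eq (by rw [hM, hC]; field_simp))
  have hfst := inv_sqrt_mul_exp_le_gaussianReal_Icc (x := t) (y := 0) (by simpa using ht)
  simp only [zero_add, add_zero, one_pow] at hfst
  have hexp : exp (-(t ^ 2 + 1)) * exp (-((M * t) ^ 2 + (C + 1) ^ 2))
      = exp (-1) * exp (-(C + 1) ^ 2) * exp (-((1 + M ^ 2) * t ^ 2)) := by
    simp only [← exp_add]
    ring_nf
  calc _ = (√(2 * π))⁻¹ * exp (-(t ^ 2 + 1))
        * ((√(2 * π))⁻¹ * exp (-((M * t) ^ 2 + (C + 1) ^ 2))) := by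
        linear_combination (√(2 * π))⁻¹ * (√(2 * π))⁻¹ * hexp.symm
    _ ≤ (gaussianReal 0 1).real (Set.Icc t (t + 1))
        * (gaussianReal 0 1).real (Set.Icc (M * t + C) (M * t + C + 1)) :=
        mul_le_mul hfst (inv_sqrt_mul_exp_le_gaussianReal_Icc hx) (by positivity) measureReal_nonneg
    _ = gauss2.real (Set.Icc t (t + 1) ×ˢ Set.Icc (M * t + C) (M * t + C + 1)) := by
        rw [gauss2, measureReal_prod_prod]
    _ ≤ _ := measureReal_mono hbox

/-- For `0 < τ < 2`, `α = 1 - τ²/2`, `β = √(τ² - τ⁴/4)` and `Δ(u,v) = min(u, αu + βv)`,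
there is `c_τ > 0` such that for every `t ≥ 0` and `0 < ε < 1/3`:
`c_τ · ε · e^{-(1+ε)(4/(4-τ²))t²} ≤ Pr[Δ(X₁,Y₁) ≥ t] ≤ e^{-(4/(4-τ²))t²/2}`
for independent standard Gaussians `X₁, Y₁`. -/
theorem delta_tail_bounds (τ α β : ℝ) (hτ0 : 0 < τ) (hτ2 : τ < 2)
    (hα : α = 1 - τ ^ 2 / 2) (hβ : β = Real.sqrt (τ ^ 2 - τ ^ 4 / 4)) :
    ∃ c : ℝ, 0 < c ∧
      ∀ t : ℝ, 0 ≤ t → ∀ ε : ℝ, 0 < ε → ε < 1 / 3 →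
        c * ε * Real.exp (-((1 + ε) * (4 / (4 - τ ^ 2)) * t ^ 2))
            ≤ (gauss2 {z : ℝ × ℝ | t ≤ min z.1 (α * z.1 + β * z.2)}).toReal ∧
          (gauss2 {z : ℝ × ℝ | t ≤ min z.1 (α * z.1 + β * z.2)}).toReal
            ≤ Real.exp (-(4 / (4 - τ ^ 2)) * t ^ 2 / 2) := by
  have h4 : 0 < 4 - τ ^ 2 := by nlinarith
  have hβ2pos : 0 < τ ^ 2 - τ ^ 4 / 4 := by
    rw [show τ ^ 2 - τ ^ 4 / 4 = τ ^ 2 * (4 - τ ^ 2) / 4 by ring]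
    positivity
  have hβ0 : 0 < β := hβ ▸ sqrt_pos.2 hβ2pos
  have hβsq : β ^ 2 = τ ^ 2 - τ ^ 4 / 4 := hβ ▸ sq_sqrt hβ2pos.le
  have hK : 1 + ((1 - α) / β) ^ 2 = 4 / (4 - τ ^ 2) := by
    rw [div_pow, hβsq, hα]
    field_simp
    ring
  have hσ : (1 + α) ^ 2 + β ^ 2 = 4 - τ ^ 2 := by
    rw [hβsq, hα]
    ring
  obtain ⟨c, hc, hlower⟩ :=
    exists_pos_mul_exp_le_gauss2_min_ge (α := α) (by rw [hα]; linarith [sq_nonneg τ]) hβ0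
  rw [hK] at hlower
  refine ⟨c, hc, fun t ht ε hε0 hε1 ↦ ⟨?_, ?_⟩⟩
  · calc c * ε * exp (-((1 + ε) * (4 / (4 - τ ^ 2)) * t ^ 2))
        ≤ c * 1 * exp (-(4 / (4 - τ ^ 2) * t ^ 2)) := by
          gcongr
          · linarith
          · nlinarith
      _ ≤ _ := by rw [mul_one]; exact hlower t ht
  · calc _ ≤ exp (-(2 * t) ^ 2 / (2 * ((1 + α) ^ 2 + β ^ 2))) :=
          gauss2_real_min_ge_le_exp α β ht
      _ = _ := by
        rw [hσ]
        congr 1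
        field_simp
        ring
end
end
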